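/- arXiv:1005.0083 — 2 statements merged into one kernel-verified Lean document; each statement's English description precedes it below -/
import Mathlib

section
/- Let 𝒜 be a z-filter on an m-admissible subalgebra F of CB(S). Then bar(𝒜) = ⋂_{A∈𝒜°} int(cl ε(A)) = ⋂_{A∈𝒜°} cl ε(A) = ⋂_{A∈𝒜} cl ε(A). -/
open Set Topology WeakDual BoundedContinuousFunction

noncomputable section

variable (S : Type*) [TopologicalSpace S] [T2Space S] [Semigroup S]

/-- Left translation `λ_s`, as a continuous map, given continuity of left translations. -/
def lamC (hl : ∀ s : S, Continuous (fun t => s * t)) (s : S) : C(S, S) :=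
  ⟨fun t => s * t, hl s⟩

/-- An m-admissible subalgebra of `CB(S) = S →ᵇ ℂ`. -/
structure MAdmissible (hl : ∀ s : S, Continuous (fun t => s * t)) : Type _ where
  carrier : StarSubalgebra ℂ (S →ᵇ ℂ)
  isClosed' : IsClosed (carrier : Set (S →ᵇ ℂ))
  leftInvariant : ∀ (s : S), ∀ f ∈ carrier, f.compContinuous (lamC S hl s) ∈ carrier
  mAdmissible : ∀ (μ : characterSpace ℂ carrier) (f : S →ᵇ ℂ) (hf : f ∈ carrier),
    ∃ g ∈ carrier, ∀ s : S,
      g s = μ ⟨f.compContinuous (lamC S hl s), leftInvariant s f hf⟩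

variable {hl : ∀ s : S, Continuous (fun t => s * t)}

/-- The spectrum `S^F` of an m-admissible subalgebra. -/
abbrev specF (F : MAdmissible S hl) : Type _ := characterSpace ℂ F.carrier

/-- Evaluation at a point, as an algebra homomorphism on `F`. -/
def evalHom (F : MAdmissible S hl) (s : S) : F.carrier →ₐ[ℂ] ℂ where
  toFun f := (f : S →ᵇ ℂ) s
  map_one' := rfl
  map_mul' _ _ := rfl
  map_zero' := rfl
  map_add' _ _ := rfl
  commutes' _ := rfl

/-- The evaluation map `ε : S → S^F`. -/
def epsF (F : MAdmissible S hl) (s : S) : specF S F :=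
  haveI : CompleteSpace F.carrier := F.isClosed'.completeSpace_coe
  CharacterSpace.equivAlgHom.symm (evalHom S F s)

variable (F : MAdmissible S hl)

/-- `Z(F)`: the collection of zero sets of members of `F`. -/
def ZSet : Set (Set S) := {A | ∃ f ∈ F.carrier, A = {s : S | f s = 0}}

/-- z-filters on `F`. -/
def IsZFilter (𝒜 : Set (Set S)) : Prop :=
  𝒜 ⊆ ZSet S F ∧ ∅ ∉ 𝒜 ∧ Set.univ ∈ 𝒜 ∧
    (∀ A ∈ 𝒜, ∀ B ∈ 𝒜, A ∩ B ∈ 𝒜) ∧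
    ∀ A ∈ 𝒜, ∀ B ∈ ZSet S F, A ⊆ B → B ∈ 𝒜

/-- `FS`: the collection of z-ultrafilters on `F`. -/
def zUltra : Set (Set (Set S)) :=
  {p | IsZFilter S F p ∧ ∀ q, IsZFilter S F q → p ⊆ q → q = p}

/-- `cl ε(A)` in `S^F`. -/
def epsCl (A : Set S) : Set (specF S F) := closure (epsF S F '' A)

/-- `⋂_{A ∈ p} cl ε(A)`; for `p ∈ FS` this is the singleton of the corresponding point of `S^F`. -/
def core (p : Set (Set S)) : Set (specF S F) := ⋂ A ∈ p, epsCl S F A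

/-- `p̃ = ⋂ [p]`, the intersection of the equivalence class of `p`. -/
def tilde (p : Set (Set S)) : Set (Set S) :=
  ⋂₀ {q | q ∈ zUltra S F ∧ core S F q = core S F p}

/-- pure z-filters. -/
def IsPure (𝒜 : Set (Set S)) : Prop :=
  IsZFilter S F 𝒜 ∧ ∀ p ∈ zUltra S F, 𝒜 ⊆ p → 𝒜 ⊆ tilde S F p

/-- `bar(𝒜) = {p̃ : 𝒜 ⊆ p}`, viewed as a subset of `S^F` via the identification of
`p̃` with the point `μ` such that `⋂_{A ∈ p} cl ε(A) = {μ}`. -/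
def barSet (𝒜 : Set (Set S)) : Set (specF S F) :=
  {μ | ∃ p ∈ zUltra S F, 𝒜 ⊆ p ∧ core S F p = {μ}}

/-- `𝒜° = {A ∈ 𝒜 : bar(𝒜) ⊆ int cl ε(A)}`. -/
def circA (𝒜 : Set (Set S)) : Set (Set S) :=
  {A ∈ 𝒜 | barSet S F 𝒜 ⊆ interior (epsCl S F A)}

/-- `⋂ J`, the intersection of the z-filters `p̃` corresponding to points of `J ⊆ S^F`. -/
def interOf (J : Set (specF S F)) : Set (Set S) :=
  ⋂₀ {C | ∃ p ∈ zUltra S F, ∃ μ ∈ J, core S F p = {μ} ∧ C = tilde S F p}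

/-- `⋂ [p̃]_R` for a relation `r` on `S^F`. -/
def classInter (r : specF S F → specF S F → Prop) (μ : specF S F) : Set (Set S) :=
  interOf S F {ν | r μ ν}

/-- `Ω_ℬ(A) = {x ∈ S : λ_x⁻¹(A) ∈ ℬ}`. -/
def OmegaZ (ℬ : Set (Set S)) (A : Set S) : Set S := {x : S | (fun t => x * t) ⁻¹' A ∈ ℬ}

/-- `𝒜 + ℬ`. -/
def zsum (𝒜 ℬ : Set (Set S)) : Set (Set S) :=
  {A ∈ ZSet S F | ∀ F' ∈ ZSet S F, OmegaZ S ℬ A ⊆ F' → F' ∈ 𝒜}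

/-- `𝒜 ⊙ ℬ = ⋂ bar(𝒜 + ℬ)`. -/
def odot (𝒜 ℬ : Set (Set S)) : Set (Set S) :=
  interOf S F (barSet S F (zsum S F 𝒜 ℬ))

/-- topological choice functions for a set `Γ` of z-filters. -/
def IsTCF (Γ : Set (Set (Set S))) (f : Set (Set S) → Set S) : Prop :=
  ∀ L ∈ Γ, f L ∈ L ∧ barSet S F L ⊆ interior (epsCl S F (f L))

/-- `A* = {𝓛 ∈ Γ : bar(𝓛) ∩ cl ε(A) ≠ ∅}`. -/
def starSet (Γ : Set (Set (Set S))) (A : Set S) : Set Γ :=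
  {L : Γ | (barSet S F (L : Set (Set S)) ∩ epsCl S F A).Nonempty}

/-- `A_* = {𝓛 ∈ Γ : bar(𝓛) ⊆ cl ε(A)}`. -/
def lowStar (Γ : Set (Set (Set S))) (A : Set S) : Set Γ :=
  {L : Γ | barSet S F (L : Set (Set S)) ⊆ epsCl S F A}

/-- The `τ*` quotient topology on `Γ`. -/
def tauStar (Γ : Set (Set (Set S))) : TopologicalSpace Γ :=
  TopologicalSpace.generateFrom {U | ∃ A ∈ ZSet S F, U = (starSet S F Γ A)ᶜ}

/-- The `τ_*` quotient topology on `Γ`. -/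
def tauLow (Γ : Set (Set (Set S))) : TopologicalSpace Γ :=
  TopologicalSpace.generateFrom {U | ∃ A ∈ ZSet S F, U = (lowStar S F Γ A)ᶜ}

/-- `Γ` is a quotient of `S^F`: conditions (a) and (b) of Theorem 3.9. -/
def IsQuotientOf (Γ : Set (Set (Set S))) : Prop :=
  (∀ L ∈ Γ, IsPure S F L) ∧
  (∀ f : Set (Set S) → Set S, IsTCF S F Γ f →
    ∃ 𝓕 : Finset (Set (Set S)), ↑𝓕 ⊆ Γ ∧
      (Set.univ : Set (specF S F)) = ⋃ L ∈ 𝓕, interior (epsCl S F (f L))) ∧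
  (∀ L ∈ Γ, ∀ K ∈ Γ, L ≠ K →
    ∃ A ∈ circA S F L, ∃ B ∈ circA S F K, ∀ C ∈ Γ,
      (∀ H ∈ ZSet S F, (interior (epsCl S F A))ᶜ ⊆ interior (epsCl S F H) → H ∈ C) ∨
      (∀ T ∈ ZSet S F, (interior (epsCl S F B))ᶜ ⊆ interior (epsCl S F T) → T ∈ C))

/-- The defining property of the map `γ : S^F → Γ` sending `p̃` to the unique member of `Γ`
contained in `p̃`. -/
def IsGamma (Γ : Set (Set (Set S))) (γ : specF S F → Γ) : Prop :=
  ∀ (μ : specF S F) (p : Set (Set S)), p ∈ zUltra S F → core S F p = {μ} →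
    (γ μ : Set (Set S)) ⊆ tilde S F p

/-- The defining property of the multiplication of `S^F`: `(μν)(f) = μ(T_ν f)` where
`(T_ν f)(s) = ν(L_s f)`. -/
def IsSpecMul (mul : specF S F → specF S F → specF S F) : Prop :=
  ∀ (μ ν : specF S F) (f : S →ᵇ ℂ) (hf : f ∈ F.carrier) (g : S →ᵇ ℂ) (hg : g ∈ F.carrier),
    (∀ s : S, g s = ν ⟨f.compContinuous (lamC S hl s), F.leftInvariant s f hf⟩) →
    mul μ ν ⟨f, hf⟩ = μ ⟨g, hg⟩

/-- `LMC(S)`, as a subset of `CB(S)`. -/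
def LMCset (hl : ∀ s : S, Continuous (fun t => s * t)) : Set (S →ᵇ ℂ) :=
  {f | ∀ μ : characterSpace ℂ (S →ᵇ ℂ),
    Continuous fun s : S => μ (f.compContinuous (lamC S hl s))}

end

/-! Since `S^F` is the Gelfand spectrum of `F`, every continuous function on it comes from `F`, so
sublevel sets of Urysohn functions pulled back along the dense map `ε` are zero sets. This lets us
separate disjoint closed subsets of `S^F` by members of `Z(F)`. Such a separation shows that every
`A ∈ 𝒜` lies in a member of `𝒜°` missing any given point outside `cl ε(A)`; and if `μ` lies in
every `cl ε(A)`, a maximal z-filter containing `𝒜` all of whose members have `μ` in their closure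
is a z-ultrafilter with `⋂_{A ∈ p} cl ε(A) = {μ}`. -/

section

variable (S : Type*) [TopologicalSpace S] [Semigroup S]
  {hl : ∀ s : S, Continuous (fun t => s * t)} (F : MAdmissible S hl)

noncomputable instance : CommCStarAlgebra F.carrier :=
  haveI : IsClosed (F.carrier : Set (S →ᵇ ℂ)) := F.isClosed'
  StarSubalgebra.commCStarAlgebra F.carrier

theorem epsF_apply (s : S) (f : F.carrier) : epsF S F s f = (f : S →ᵇ ℂ) s :=
  congrFun (CharacterSpace.equivAlgHom_symm_coe (evalHom S F s)) f

theorem exists_gelfand_eq (ψ : C(specF S F, ℂ)) :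
    ∃ f : F.carrier, ∀ ν : specF S F, ν f = ψ ν := by
  obtain ⟨f, rfl⟩ := (gelfandTransform_bijective (A := F.carrier)).2 ψ
  exact ⟨f, fun ν => rfl⟩

theorem preimage_zero_mem_ZSet (ψ : C(specF S F, ℂ)) :
    epsF S F ⁻¹' (ψ ⁻¹' {0}) ∈ ZSet S F := by
  obtain ⟨f, hf⟩ := exists_gelfand_eq S F ψ
  exact ⟨f, f.2, by ext s; simp [← hf, epsF_apply]⟩

theorem ZSet.inter_mem {A B : Set S} (hA : A ∈ ZSet S F) (hB : B ∈ ZSet S F) :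
    A ∩ B ∈ ZSet S F := by
  obtain ⟨f, hf, rfl⟩ := hA
  obtain ⟨g, hg, rfl⟩ := hB
  refine ⟨star f * f + star g * g,
    add_mem (mul_mem (star_mem hf) hf) (mul_mem (star_mem hg) hg), ?_⟩
  ext s
  have hval : (star f * f + star g * g) s
      = (starRingEnd ℂ) (f s) * f s + (starRingEnd ℂ) (g s) * g s := rfl
  simp only [Set.mem_inter_iff, Set.mem_ofPred_eq, hval,
    ← Complex.normSq_eq_conj_mul_self, ← Complex.ofReal_add, Complex.ofReal_eq_zero,
    add_eq_zero_iff_of_nonneg (Complex.normSq_nonneg _) (Complex.normSq_nonneg _),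
    Complex.normSq_eq_zero]

theorem denseRange_epsF : DenseRange (epsF S F) := by
  rw [denseRange_iff_closure_range]
  by_contra hdense
  obtain ⟨μ, hμ⟩ := (Set.ne_univ_iff_exists_notMem _).mp hdense
  obtain ⟨φ, hφ0, hφ1, -⟩ := exists_continuous_zero_one_of_isClosed isClosed_closure
    isClosed_singleton (Set.disjoint_singleton_right.mpr hμ)
  obtain ⟨f, hf⟩ := exists_gelfand_eq S F
    ⟨fun ν => ((φ ν : ℝ) : ℂ), Complex.continuous_ofReal.comp φ.continuous⟩
  have hf0 : f = 0 := by
    ext s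
    have : φ (epsF S F s) = 0 := hφ0 (subset_closure (Set.mem_range_self s))
    simpa [← epsF_apply, this] using hf (epsF S F s)
  simpa [hf0, hφ1 rfl] using hf μ

theorem epsCl_mono {A B : Set S} (h : A ⊆ B) : epsCl S F A ⊆ epsCl S F B :=
  closure_mono (Set.image_mono h)

theorem epsCl_empty : epsCl S F ∅ = ∅ := by
  simp [epsCl]

theorem subset_epsCl_preimage {U : Set (specF S F)} (hU : IsOpen U) :
    U ⊆ epsCl S F (epsF S F ⁻¹' U) := by
  rw [epsCl, Set.image_preimage_eq_inter_range]
  exact (denseRange_epsF S F).open_subset_closure_inter hU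

theorem preimage_epsCl {C : Set S} (hC : C ∈ ZSet S F) : epsF S F ⁻¹' epsCl S F C = C := by
  obtain ⟨f, hf, rfl⟩ := hC
  refine subset_antisymm (fun s hs => ?_) fun s hs => subset_closure ⟨s, hs, rfl⟩
  have hclosed : IsClosed {ν : specF S F | ν ⟨f, hf⟩ = 0} :=
    isClosed_eq ((WeakDual.eval_continuous _).comp continuous_subtype_val) continuous_const
  have hsub : epsCl S F {s | f s = 0} ⊆ {ν : specF S F | ν ⟨f, hf⟩ = 0} :=
    closure_minimal (by rintro _ ⟨t, ht, rfl⟩; simpa [epsF_apply] using ht) hclosed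
  simpa [epsF_apply] using hsub hs

theorem exists_mem_ZSet_separating {K L : Set (specF S F)} (hK : IsClosed K) (hL : IsClosed L)
    (hKL : Disjoint K L) :
    ∃ C ∈ ZSet S F, K ⊆ interior (epsCl S F C) ∧ Disjoint (epsCl S F C) L := by
  obtain ⟨φ, hφ0, hφ1, -⟩ := exists_continuous_zero_one_of_isClosed hK hL hKL
  let C := epsF S F ⁻¹' (φ ⁻¹' Set.Iic (1 / 2))
  have hC : C ∈ ZSet S F := by
    convert preimage_zero_mem_ZSet S F ⟨fun ν => ((max (φ ν - 1 / 2) 0 : ℝ) : ℂ), by fun_prop⟩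
      using 1
    ext s
    simp [C]
  have hopen : IsOpen (φ ⁻¹' Set.Iio (1 / 2)) := isOpen_Iio.preimage φ.continuous
  have hK_sub : K ⊆ interior (epsCl S F C) := by
    refine fun ν hν => interior_maximal ?_ hopen (by simp [hφ0 hν])
    refine (subset_epsCl_preimage S F hopen).trans (epsCl_mono S F fun s hs => ?_)
    exact (show φ (epsF S F s) < 1 / 2 from hs).le
  have hcl_sub : epsCl S F C ⊆ φ ⁻¹' Set.Iic (1 / 2) :=
    closure_minimal (by rintro _ ⟨s, hs, rfl⟩; exact hs) (isClosed_Iic.preimage φ.continuous)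
  refine ⟨C, hC, hK_sub, Set.disjoint_left.mpr fun ν hνC hνL => ?_⟩
  have hφν : φ ν ≤ 1 / 2 := hcl_sub hνC
  norm_num [hφ1 hνL] at hφν

theorem mem_epsCl_inter {μ : specF S F} {A C : Set S} (hC : C ∈ ZSet S F)
    (hA : μ ∈ epsCl S F A) (hμC : μ ∈ interior (epsCl S F C)) : μ ∈ epsCl S F (A ∩ C) := by
  refine closure_mono ?_ (isOpen_interior.inter_closure ⟨hμC, hA⟩)
  rintro _ ⟨hint, s, hs, rfl⟩
  have hsC : s ∈ C := (preimage_epsCl S F hC).subset (interior_subset (s := epsCl S F C) hint)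
  exact ⟨s, ⟨hs, hsC⟩, rfl⟩

theorem mem_core {μ : specF S F} {p : Set (Set S)} :
    μ ∈ core S F p ↔ ∀ A ∈ p, μ ∈ epsCl S F A :=
  Set.mem_iInter₂

theorem barSet_subset_core (𝒜 : Set (Set S)) : barSet S F 𝒜 ⊆ core S F 𝒜 := by
  rintro μ ⟨p, -, h𝒜p, hp⟩
  exact Set.biInter_subset_biInter_left h𝒜p (hp.ge (Set.mem_singleton μ))

theorem exists_mem_circA_notMem_epsCl {𝒜 : Set (Set S)} (h𝒜 : IsZFilter S F 𝒜) {A : Set S}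
    (hA : A ∈ 𝒜) {μ : specF S F} (hμ : μ ∉ epsCl S F A) :
    ∃ C ∈ circA S F 𝒜, μ ∉ epsCl S F C := by
  obtain ⟨C, hC, hAC, hμC⟩ := exists_mem_ZSet_separating S F isClosed_closure
    isClosed_singleton (Set.disjoint_singleton_right.mpr hμ)
  have hAsubC : A ⊆ C := fun s hs =>
    (preimage_epsCl S F hC).subset
      (interior_subset (s := epsCl S F C) (hAC (subset_closure ⟨s, hs, rfl⟩)))
  refine ⟨C, ⟨h𝒜.2.2.2.2 A hA C hC hAsubC, ?_⟩, Set.disjoint_singleton_right.mp hμC⟩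
  exact (barSet_subset_core S F 𝒜).trans ((Set.biInter_subset_of_mem hA).trans hAC)

theorem iInter_circA_epsCl_subset_core {𝒜 : Set (Set S)} (h𝒜 : IsZFilter S F 𝒜) :
    (⋂ A ∈ circA S F 𝒜, epsCl S F A) ⊆ core S F 𝒜 := by
  refine fun μ hμ => (mem_core S F).mpr fun A hA => ?_
  by_contra hμA
  obtain ⟨C, hC, hμC⟩ := exists_mem_circA_notMem_epsCl S F h𝒜 hA hμA
  exact hμC (Set.mem_iInter₂.mp hμ C hC)

theorem IsZFilter.sUnion {c : Set (Set (Set S))} (hc : ∀ q ∈ c, IsZFilter S F q)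
    (hchain : IsChain (· ⊆ ·) c) (hne : c.Nonempty) : IsZFilter S F (⋃₀ c) := by
  obtain ⟨q₀, hq₀⟩ := hne
  refine ⟨?_, ?_, ⟨q₀, hq₀, (hc q₀ hq₀).2.2.1⟩, ?_, ?_⟩
  · rintro B ⟨q, hq, hB⟩
    exact (hc q hq).1 hB
  · rintro ⟨q, hq, hB⟩
    exact (hc q hq).2.1 hB
  · rintro A ⟨qa, hqa, hA⟩ B ⟨qb, hqb, hB⟩
    rcases hchain.total hqa hqb with hab | hba
    · exact ⟨qb, hqb, (hc qb hqb).2.2.2.1 _ (hab hA) _ hB⟩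
    · exact ⟨qa, hqa, (hc qa hqa).2.2.2.1 _ hA _ (hba hB)⟩
  · rintro A ⟨q, hq, hA⟩ B hB hAB
    exact ⟨q, hq, (hc q hq).2.2.2.2 _ hA _ hB hAB⟩

theorem IsZFilter.adjoin {p : Set (Set S)} (hp : IsZFilter S F p) {C : Set S}
    (hne : ∀ A ∈ p, A ∩ C ≠ ∅) : IsZFilter S F {B ∈ ZSet S F | ∃ A ∈ p, A ∩ C ⊆ B} := by
  refine ⟨fun B hB => hB.1, ?_, ⟨hp.1 hp.2.2.1, ?_⟩, ?_, ?_⟩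
  · rintro ⟨-, A, hA, hAC⟩
    exact hne A hA (Set.subset_empty_iff.mp hAC)
  · exact ⟨Set.univ, hp.2.2.1, Set.subset_univ _⟩
  · rintro B₁ ⟨hB₁, A₁, hA₁, h₁⟩ B₂ ⟨hB₂, A₂, hA₂, h₂⟩
    exact ⟨ZSet.inter_mem S F hB₁ hB₂, A₁ ∩ A₂, hp.2.2.2.1 _ hA₁ _ hA₂,
      fun s hs => ⟨h₁ ⟨hs.1.1, hs.2⟩, h₂ ⟨hs.1.2, hs.2⟩⟩⟩
  · rintro B ⟨-, A, hA, hAB⟩ B' hB' hBB'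
    exact ⟨hB', A, hA, hAB.trans hBB'⟩

def IsZFilterAt (μ : specF S F) (q : Set (Set S)) : Prop :=
  IsZFilter S F q ∧ μ ∈ core S F q

theorem exists_maximal_isZFilterAt {μ : specF S F} {𝒜 : Set (Set S)}
    (h𝒜 : IsZFilterAt S F μ 𝒜) : ∃ p, 𝒜 ⊆ p ∧ Maximal (IsZFilterAt S F μ) p := by
  refine zorn_subset_nonempty {q | IsZFilterAt S F μ q} (fun c hc hchain hne => ?_) 𝒜 h𝒜
  refine ⟨⋃₀ c, ⟨IsZFilter.sUnion S F (fun q hq => (hc hq).1) hchain hne, ?_⟩,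
    fun q hq => Set.subset_sUnion_of_mem hq⟩
  rintro _ ⟨B, rfl⟩
  simp only [Set.mem_iInter]
  rintro ⟨q, hq, hB⟩
  exact (mem_core S F).mp (hc hq).2 B hB

theorem mem_of_mem_interior_epsCl {μ : specF S F} {p : Set (Set S)}
    (hp : Maximal (IsZFilterAt S F μ) p) {C : Set S} (hC : C ∈ ZSet S F)
    (hμC : μ ∈ interior (epsCl S F C)) : C ∈ p := by
  have hμ : ∀ A ∈ p, μ ∈ epsCl S F (A ∩ C) := fun A hA =>
    mem_epsCl_inter S F hC ((mem_core S F).mp hp.1.2 A hA) hμC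
  have hne : ∀ A ∈ p, A ∩ C ≠ ∅ := fun A hA hAC => by
    simpa [hAC, epsCl_empty] using hμ A hA
  have hq : IsZFilterAt S F μ {B ∈ ZSet S F | ∃ A ∈ p, A ∩ C ⊆ B} := by
    refine ⟨hp.1.1.adjoin S F hne, (mem_core S F).mpr ?_⟩
    rintro B ⟨-, A, hA, hAB⟩
    exact epsCl_mono S F hAB (hμ A hA)
  exact hp.2 hq (fun A hA => ⟨hp.1.1.1 hA, A, hA, Set.inter_subset_left⟩)
    ⟨hC, Set.univ, hp.1.1.2.2.1, Set.inter_subset_right⟩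

theorem exists_mem_inter_eq_empty {μ : specF S F} {p : Set (Set S)}
    (hp : Maximal (IsZFilterAt S F μ) p) {Z : Set S} (hμZ : μ ∉ epsCl S F Z) :
    ∃ C ∈ p, C ∩ Z = ∅ := by
  obtain ⟨C, hC, hμC, hCZ⟩ := exists_mem_ZSet_separating S F isClosed_singleton
    isClosed_closure (Set.disjoint_singleton_left.mpr hμZ)
  refine ⟨C, mem_of_mem_interior_epsCl S F hp hC (hμC rfl), Set.subset_empty_iff.mp ?_⟩
  exact fun s hs => Set.disjoint_left.mp hCZ (subset_closure ⟨s, hs.1, rfl⟩)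
    (subset_closure ⟨s, hs.2, rfl⟩)

theorem mem_zUltra_of_maximal {μ : specF S F} {p : Set (Set S)}
    (hp : Maximal (IsZFilterAt S F μ) p) : p ∈ zUltra S F := by
  refine ⟨hp.1.1, fun q hq hpq => subset_antisymm ?_ hpq⟩
  refine hp.2 ⟨hq, (mem_core S F).mpr fun Z hZ => ?_⟩ hpq
  by_contra hμZ
  obtain ⟨C, hC, hCZ⟩ := exists_mem_inter_eq_empty S F hp hμZ
  exact hq.2.1 (hCZ ▸ hq.2.2.2.1 _ (hpq hC) _ hZ)

theorem core_eq_singleton_of_maximal {μ : specF S F} {p : Set (Set S)}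
    (hp : Maximal (IsZFilterAt S F μ) p) : core S F p = {μ} := by
  refine subset_antisymm (fun ν hν => ?_) (Set.singleton_subset_iff.mpr hp.1.2)
  by_contra hνμ
  obtain ⟨C, hC, hμC, hνC⟩ := exists_mem_ZSet_separating S F isClosed_singleton
    isClosed_singleton (Set.disjoint_singleton.mpr (Ne.symm hνμ))
  exact Set.disjoint_singleton_right.mp hνC
    ((mem_core S F).mp hν C (mem_of_mem_interior_epsCl S F hp hC (hμC rfl)))

theorem core_subset_barSet {𝒜 : Set (Set S)} (h𝒜 : IsZFilter S F 𝒜) :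
    core S F 𝒜 ⊆ barSet S F 𝒜 := fun μ hμ => by
  obtain ⟨p, h𝒜p, hp⟩ := exists_maximal_isZFilterAt S F ⟨h𝒜, hμ⟩
  exact ⟨p, mem_zUltra_of_maximal S F hp, h𝒜p, core_eq_singleton_of_maximal S F hp⟩

end

variable (S : Type*) [TopologicalSpace S] [T2Space S] [Semigroup S]
  {hl : ∀ s : S, Continuous (fun t => s * t)} (F : MAdmissible S hl)

theorem statement10
    (𝒜 : Set (Set S)) (h𝒜 : IsZFilter S F 𝒜) :
    barSet S F 𝒜 = ⋂ A ∈ circA S F 𝒜, interior (epsCl S F A) ∧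
      barSet S F 𝒜 = ⋂ A ∈ circA S F 𝒜, epsCl S F A ∧
      barSet S F 𝒜 = ⋂ A ∈ 𝒜, epsCl S F A := by
  have h_bar_core : barSet S F 𝒜 = core S F 𝒜 :=
    subset_antisymm (barSet_subset_core S F 𝒜) (core_subset_barSet S F h𝒜)
  have h_bar_int : barSet S F 𝒜 ⊆ ⋂ A ∈ circA S F 𝒜, interior (epsCl S F A) :=
    Set.subset_iInter₂ fun A hA => hA.2
  have h_int_cl :
      (⋂ A ∈ circA S F 𝒜, interior (epsCl S F A)) ⊆ ⋂ A ∈ circA S F 𝒜, epsCl S F A :=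
    Set.iInter₂_mono fun _ _ => interior_subset
  have h_cl_bar : (⋂ A ∈ circA S F 𝒜, epsCl S F A) ⊆ barSet S F 𝒜 :=
    h_bar_core ▸ iInter_circA_epsCl_subset_core S F h𝒜
  exact ⟨subset_antisymm h_bar_int (h_int_cl.trans h_cl_bar),
    subset_antisymm (h_bar_int.trans h_int_cl) h_cl_bar, h_bar_core⟩
end

section
/- Let p ∈ FS, let p̃ ∈ S^F be the corresponding point, and let A ∈ Z(F). If p̃ ∈ int(cl ε(A)) (interior and closure taken in S^F), then A ∈ p̃. -/
open Set Topology WeakDual BoundedContinuousFunction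

noncomputable section

variable (S : Type*) [TopologicalSpace S] [T2Space S] [Semigroup S]

variable {hl : ∀ s : S, Continuous (fun t => s * t)}

variable (F : MAdmissible S hl)

/-!
If `q ~ p`, then `μ ∈ cl ε(B)` for every `B ∈ q`, so the open set `int cl ε(A)` around `μ` meets
`ε(B)`; as `cl ε(A)` only contains images of points of `A`, the zero set `A` meets every member of
`q`. Adjoining `A` to `q` then gives a z-filter, and maximality of `q` puts `A` in `q`.
-/

section ZeroSets

variable {X : Type*} [TopologicalSpace X] [Semigroup X] {hX : ∀ s : X, Continuous (fun t => s * t)}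
  (G : MAdmissible X hX)

/-- `cl ε(Z(f))` lies in the closed set `{ν | ν f = 0}`. -/
theorem mem_of_epsF_mem_epsCl {A : Set X} (hA : A ∈ ZSet X G) {s : X}
    (hs : epsF X G s ∈ epsCl X G A) : s ∈ A := by
  obtain ⟨f, hf, rfl⟩ := hA
  have hcl : epsCl X G {s | f s = 0} ⊆ {ν : specF X G | ν ⟨f, hf⟩ = 0} := by
    refine closure_minimal ?_ (isClosed_eq ?_ continuous_const)
    · rintro _ ⟨t, ht, rfl⟩
      exact ht
    · exact (WeakDual.eval_continuous _).comp continuous_subtype_val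
  exact hcl hs

theorem inter_nonempty_of_mem_interior_epsCl {A B : Set X} (hA : A ∈ ZSet X G)
    {μ : specF X G} (hμA : μ ∈ interior (epsCl X G A)) (hμB : μ ∈ epsCl X G B) :
    (A ∩ B).Nonempty := by
  obtain ⟨_, hν, s, hs, rfl⟩ := mem_closure_iff.mp hμB _ isOpen_interior hμA
  exact ⟨s, mem_of_epsF_mem_epsCl G hA (interior_subset hν), hs⟩

theorem univ_mem_ZSet : (univ : Set X) ∈ ZSet X G :=
  ⟨0, zero_mem _, by ext; simp⟩

/-- `Z(g) ∩ Z(k) = Z(|g|² + |k|²)`. -/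
theorem inter_mem_ZSet {A B : Set X} (hA : A ∈ ZSet X G) (hB : B ∈ ZSet X G) :
    A ∩ B ∈ ZSet X G := by
  obtain ⟨g, hg, rfl⟩ := hA
  obtain ⟨k, hk, rfl⟩ := hB
  refine ⟨star g * g + star k * k,
    add_mem (mul_mem (star_mem hg) hg) (mul_mem (star_mem hk) hk), ?_⟩
  ext s
  have hval : (star g * g + star k * k) s
      = ((Complex.normSq (g s) + Complex.normSq (k s) : ℝ) : ℂ) := by
    simp [mul_comm, Complex.mul_conj]
  simp only [mem_inter_iff, mem_ofPred_eq, hval, Complex.ofReal_eq_zero,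
    add_eq_zero_iff_of_nonneg (Complex.normSq_nonneg _) (Complex.normSq_nonneg _),
    Complex.normSq_eq_zero]

def adjoinZ (q : Set (Set X)) (A : Set X) : Set (Set X) :=
  {C | C ∈ ZSet X G ∧ ∃ B ∈ q, A ∩ B ⊆ C}

theorem isZFilter_adjoinZ {q : Set (Set X)} (hq : IsZFilter X G q) {A : Set X}
    (hmeet : ∀ B ∈ q, (A ∩ B).Nonempty) : IsZFilter X G (adjoinZ G q A) := by
  obtain ⟨-, -, hquniv, hqinter, -⟩ := hq
  refine ⟨fun C hC => hC.1, ?_, ⟨univ_mem_ZSet G, univ, hquniv, subset_univ _⟩, ?_, ?_⟩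
  · rintro ⟨-, B, hB, hAB⟩
    exact (hmeet B hB).ne_empty (subset_empty_iff.mp hAB)
  · rintro C ⟨hCZ, B₁, hB₁, hC⟩ D ⟨hDZ, B₂, hB₂, hD⟩
    refine ⟨inter_mem_ZSet G hCZ hDZ, B₁ ∩ B₂, hqinter B₁ hB₁ B₂ hB₂, ?_⟩
    rintro x ⟨hxA, hxB₁, hxB₂⟩
    exact ⟨hC ⟨hxA, hxB₁⟩, hD ⟨hxA, hxB₂⟩⟩
  · rintro C ⟨-, B, hB, hC⟩ D hDZ hCD
    exact ⟨hDZ, B, hB, hC.trans hCD⟩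

theorem mem_zUltra_of_forall_inter_nonempty {q : Set (Set X)} (hq : q ∈ zUltra X G)
    {A : Set X} (hA : A ∈ ZSet X G) (hmeet : ∀ B ∈ q, (A ∩ B).Nonempty) : A ∈ q := by
  have hle : q ⊆ adjoinZ G q A := fun B hB => ⟨hq.1.1 hB, B, hB, inter_subset_right⟩
  rw [← hq.2 _ (isZFilter_adjoinZ G hq.1 hmeet) hle]
  exact ⟨hA, univ, hq.1.2.2.1, inter_subset_left⟩

end ZeroSets

theorem statement12
    (p : Set (Set S))
    (μ : specF S F) (hμ : core S F p = {μ})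
    (A : Set S) (hA : A ∈ ZSet S F)
    (h : μ ∈ interior (epsCl S F A)) :
    A ∈ tilde S F p := by
  rw [tilde, mem_sInter]
  rintro q ⟨hq, hqp⟩
  refine mem_zUltra_of_forall_inter_nonempty F hq hA fun B hB => ?_
  have hμq : μ ∈ core S F q := by rw [hqp, hμ]; rfl
  exact inter_nonempty_of_mem_interior_epsCl F hA h (mem_iInter₂.mp hμq B hB)

end
end
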